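/- Let ε > 0, assume D_f > 0, D_g > 0, R > 0, choose ρ = ε/(4 D_f), μ = ε/(4 D_g), κ = ε/(2 R²), let p* be an optimal solution of the dual problem (a minimizer of θ) with ‖p*‖ ≤ R, and let p_DS* be the unique minimizer of θ_{ρ,μ,κ}. If p ∈ ℝ^m satisfies θ_{ρ,μ}(p) − θ_{ρ,μ}(p_DS*) ≤ (25/8)(θ(0) − θ(p*) + ε/2)·e^{−t/2} for some t ≥ 2·ln( 25(θ(0) − θ(p*) + ε/2)/(2ε) ), then θ(p) + v(D) ≤ ε. -/

import Mathlib

open scoped RealInnerProductSpace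
noncomputable section

/-- `Euc k` is the Euclidean space `ℝ^k`. -/
abbrev Euc (k : ℕ) := EuclideanSpace ℝ (Fin k)

/-- `f` is proper: nowhere `-∞` and somewhere finite. -/
def IsProperFn {k : ℕ} (f : Euc k → EReal) : Prop :=
  (∀ x, f x ≠ ⊥) ∧ ∃ x, f x ≠ ⊤

/-- Convexity of an extended-real-valued function. -/
def IsConvexFn {k : ℕ} (f : Euc k → EReal) : Prop :=
  ∀ x y : Euc k, ∀ t : ℝ, 0 < t → t < 1 →
    f (t • x + (1 - t) • y) ≤ (t : EReal) * f x + ((1 - t : ℝ) : EReal) * f y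

/-- `f` is proper, convex, lower semicontinuous with bounded effective domain. -/
def NiceFn {k : ℕ} (f : Euc k → EReal) : Prop :=
  IsProperFn f ∧ IsConvexFn f ∧ LowerSemicontinuous f ∧
    Bornology.IsBounded {x | f x ≠ ⊤}

/-- The Fenchel conjugate `f*(q) = sup_x {⟨q,x⟩ - f(x)}` (real-valued). -/
noncomputable def conjFn {k : ℕ} (f : Euc k → EReal) (q : Euc k) : ℝ :=
  (⨆ x, ((⟪q, x⟫ : ℝ) : EReal) - f x).toReal

/-- The Fenchel conjugate as an extended real. -/
noncomputable def conjE {k : ℕ} (f : Euc k → EReal) (q : Euc k) : EReal :=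
  ⨆ x, ((⟪q, x⟫ : ℝ) : EReal) - f x

/-- The smoothed conjugate `f_r*(q) = sup_x {⟨q,x⟩ - f(x) - (r/2)‖x‖²}`. -/
noncomputable def conjSm {k : ℕ} (f : Euc k → EReal) (r : ℝ) (q : Euc k) : ℝ :=
  (⨆ x, ((⟪q, x⟫ - r / 2 * ‖x‖ ^ 2 : ℝ) : EReal) - f x).toReal

/-- The proximal objective `x ↦ f(x) + (r/2)‖u - x‖²`. -/
noncomputable def proxObj {k : ℕ} (f : Euc k → EReal) (r : ℝ) (u x : Euc k) : EReal :=
  f x + ((r / 2 * ‖u - x‖ ^ 2 : ℝ) : EReal)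

/-- `D_f = sup {‖x‖²/2 : x ∈ dom f}`. -/
noncomputable def Dsup {k : ℕ} (f : Euc k → EReal) : ℝ :=
  sSup ((fun x : Euc k => ‖x‖ ^ 2 / 2) '' {x | f x ≠ ⊤})

/-- `x0` is the unique global minimizer of `h`. -/
def UniqMin {α : Type*} {β : Type*} [Preorder β] (h : α → β) (x0 : α) : Prop :=
  (∀ x, h x0 ≤ h x) ∧ ∀ x, (∀ y, h x ≤ h y) → x = x0

/-- The dual objective `θ(p) = f*(A*p) + g*(-p)`. -/
noncomputable def theta {n m : ℕ} (f : Euc n → EReal) (g : Euc m → EReal)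
    (A : Euc n →L[ℝ] Euc m) (p : Euc m) : ℝ :=
  conjFn f (ContinuousLinearMap.adjoint A p) + conjFn g (-p)

/-- The singly smoothed dual objective `θ_{ρ,μ}(p) = f_ρ*(A*p) + g_μ*(-p)`. -/
noncomputable def thetaSm {n m : ℕ} (f : Euc n → EReal) (g : Euc m → EReal)
    (A : Euc n →L[ℝ] Euc m) (r s : ℝ) (p : Euc m) : ℝ :=
  conjSm f r (ContinuousLinearMap.adjoint A p) + conjSm g s (-p)

/-- The doubly smoothed dual objective `θ_{ρ,μ,κ}(p) = θ_{ρ,μ}(p) + (κ/2)‖p‖²`. -/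
noncomputable def thetaSmK {n m : ℕ} (f : Euc n → EReal) (g : Euc m → EReal)
    (A : Euc n →L[ℝ] Euc m) (r s c : ℝ) (p : Euc m) : ℝ :=
  thetaSm f g A r s p + c / 2 * ‖p‖ ^ 2

/-- The optimal value of the primal problem `v(P) = inf {f(x) + g(Ax)}`. -/
noncomputable def vPrimal {n m : ℕ} (f : Euc n → EReal) (g : Euc m → EReal)
    (A : Euc n →L[ℝ] Euc m) : EReal := ⨅ x, f x + g (A x)

/-- The optimal value of the dual problem `v(D) = -inf θ`. -/
noncomputable def vDual {n m : ℕ} (f : Euc n → EReal) (g : Euc m → EReal)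
    (A : Euc n →L[ℝ] Euc m) : ℝ := -(⨅ p, theta f g A p)

/-!
On `dom f` the smoothing term `(ρ/2)‖x‖²` is at most `ρ D_f`, so `f_ρ* ≤ f* ≤ f_ρ* + ρ D_f`, and
likewise for `g`. These conjugates are finite because `f` is bounded below, being lower
semicontinuous on the compact closure of its bounded domain. With the given `ρ, μ` this gives
`θ_{ρ,μ} ≤ θ ≤ θ_{ρ,μ} + ε/2`. Minimality of `p_DS*` for `θ_{ρ,μ,κ}` and `‖p*‖ ≤ R` give
`θ_{ρ,μ}(p_DS*) ≤ θ_{ρ,μ}(p*) + κR²/2 ≤ θ(p*) + ε/4`, and the lower bound on `t` makes the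
assumed gap at `p` at most `ε/4`. Adding up, `θ(p) ≤ θ(p*) + ε = ε - v(D)`.
-/

lemma div_mul_le_of_nonneg {a : ℝ} (ha : 0 ≤ a) (b : ℝ) : a / b * b ≤ a := by
  rcases eq_or_ne b 0 with rfl | hb
  · simpa using ha
  · rw [div_mul_cancel₀ a hb]

lemma mul_exp_neg_half_le {a b t : ℝ} (ha : 0 < a) (hb : 0 < b)
    (ht : 2 * Real.log (a / b) ≤ t) : a * Real.exp (-t / 2) ≤ b := by
  have hexp : Real.exp (-t / 2) ≤ b / a := by
    rw [← Real.exp_log (div_pos hb ha), Real.exp_le_exp, ← inv_div a b, Real.log_inv]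
    linarith
  calc a * Real.exp (-t / 2) ≤ a * (b / a) := by gcongr
    _ = b := mul_div_cancel₀ b ha.ne'

lemma EReal.toReal_le_toReal_add {a b : EReal} {d : ℝ} (h : b ≤ a + d) (ha : a ≠ ⊤)
    (hb : b ≠ ⊥) : b.toReal ≤ a.toReal + d := by
  have ha' : a ≠ ⊥ := by
    rintro rfl
    exact hb (le_bot_iff.mp (by simpa using h))
  lift a to ℝ using ⟨ha, ha'⟩
  have := EReal.toReal_le_toReal h hb (EReal.coe_ne_top _)
  rwa [← EReal.coe_add, EReal.toReal_coe] at this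

lemma exists_coe_le_of_lowerSemicontinuous {α : Type*} [PseudoMetricSpace α] [ProperSpace α]
    {f : α → EReal} (hbot : ∀ x, f x ≠ ⊥) (hlsc : LowerSemicontinuous f)
    (hbdd : Bornology.IsBounded {x | f x ≠ ⊤}) : ∃ c : ℝ, ∀ x, (c : EReal) ≤ f x := by
  rcases Set.eq_empty_or_nonempty {x | f x ≠ ⊤} with hempty | ⟨x₀, hx₀⟩
  · refine ⟨0, fun x => ?_⟩
    have : f x = ⊤ := by simpa using Set.eq_empty_iff_forall_notMem.mp hempty x
    simp [this]
  obtain ⟨a, -, ha⟩ := (hlsc.lowerSemicontinuousOn _).exists_isMinOn ⟨x₀, subset_closure hx₀⟩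
    hbdd.isCompact_closure
  refine ⟨(f a).toReal, fun x => (EReal.coe_toReal_le (hbot a)).trans ?_⟩
  by_cases hx : f x = ⊤
  · simp [hx]
  · exact ha (subset_closure hx)

section Conjugate

variable {k : ℕ} {f : Euc k → EReal}

def conjSmE (f : Euc k → EReal) (r : ℝ) (q : Euc k) : EReal :=
  ⨆ x, ((⟪q, x⟫ - r / 2 * ‖x‖ ^ 2 : ℝ) : EReal) - f x

lemma norm_sq_div_two_le_Dsup (hbdd : Bornology.IsBounded {x | f x ≠ ⊤}) {x : Euc k}
    (hx : f x ≠ ⊤) : ‖x‖ ^ 2 / 2 ≤ Dsup f := by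
  obtain ⟨M, hM⟩ := isBounded_iff_forall_norm_le.mp hbdd
  refine le_csSup ⟨M ^ 2 / 2, ?_⟩ ⟨x, hx, rfl⟩
  rintro _ ⟨y, hy, rfl⟩
  have := pow_le_pow_left₀ (norm_nonneg y) (hM y hy) 2
  linarith

lemma Dsup_nonneg : 0 ≤ Dsup f :=
  Real.sSup_nonneg (by rintro _ ⟨x, -, rfl⟩; positivity)

lemma conjSmE_le_conjE {r : ℝ} (hr : 0 ≤ r) (q : Euc k) : conjSmE f r q ≤ conjE f q :=
  iSup_mono fun x => EReal.sub_le_sub (EReal.coe_le_coe_iff.mpr (by nlinarith [sq_nonneg ‖x‖]))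
    le_rfl

lemma conjE_le_conjSmE_add {r D : ℝ} (hr : 0 ≤ r) (hD : ∀ x, f x ≠ ⊤ → ‖x‖ ^ 2 / 2 ≤ D)
    (q : Euc k) : conjE f q ≤ conjSmE f r q + (r * D : ℝ) := by
  refine iSup_le fun x => le_trans ?_ (add_le_add_left (le_iSup _ x) _)
  cases h : f x using EReal.rec with
  | bot => simp only [EReal.coe_sub_bot, EReal.top_add_coe, le_refl]
  | top => simp
  | coe y =>
    have := hD x (by simp [h])
    norm_cast
    nlinarith

lemma conjSmE_ne_bot (hf : IsProperFn f) (r : ℝ) (q : Euc k) : conjSmE f r q ≠ ⊥ := by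
  obtain ⟨hbot, x₀, hx₀⟩ := hf
  lift f x₀ to ℝ using ⟨hx₀, hbot x₀⟩ with y hy
  refine ne_bot_of_le_ne_bot ?_ (le_iSup _ x₀)
  rw [← hy]
  exact EReal.coe_ne_bot _

lemma conjE_ne_top (hbot : ∀ x, f x ≠ ⊥) (hlsc : LowerSemicontinuous f)
    (hbdd : Bornology.IsBounded {x | f x ≠ ⊤}) (q : Euc k) : conjE f q ≠ ⊤ := by
  obtain ⟨c, hc⟩ := exists_coe_le_of_lowerSemicontinuous hbot hlsc hbdd
  obtain ⟨M, hM⟩ := isBounded_iff_forall_norm_le.mp hbdd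
  refine ne_top_of_le_ne_top (EReal.coe_ne_top (‖q‖ * M - c)) (iSup_le fun x => ?_)
  have hcx := hc x
  cases h : f x using EReal.rec with
  | bot => simp [h] at hcx
  | top => simp
  | coe y =>
    rw [h, EReal.coe_le_coe_iff] at hcx
    have := hM x (by simp [h])
    norm_cast
    nlinarith [real_inner_le_norm q x, norm_nonneg q]

lemma conjSm_le_conjFn (hf : IsProperFn f) (hlsc : LowerSemicontinuous f)
    (hbdd : Bornology.IsBounded {x | f x ≠ ⊤}) {r : ℝ} (hr : 0 ≤ r) (q : Euc k) :
    conjSm f r q ≤ conjFn f q :=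
  EReal.toReal_le_toReal (conjSmE_le_conjE hr q) (conjSmE_ne_bot hf r q)
    (conjE_ne_top hf.1 hlsc hbdd q)

lemma conjFn_le_conjSm_add (hf : IsProperFn f) (hlsc : LowerSemicontinuous f)
    (hbdd : Bornology.IsBounded {x | f x ≠ ⊤}) {r : ℝ} (hr : 0 ≤ r) (q : Euc k) :
    conjFn f q ≤ conjSm f r q + r * Dsup f :=
  EReal.toReal_le_toReal_add
    (conjE_le_conjSmE_add hr (fun _ => norm_sq_div_two_le_Dsup hbdd) q)
    (ne_top_of_le_ne_top (conjE_ne_top hf.1 hlsc hbdd q) (conjSmE_le_conjE hr q))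
    (ne_bot_of_le_ne_bot (conjSmE_ne_bot hf r q) (conjSmE_le_conjE hr q))

end Conjugate

section Dual

variable {n m : ℕ} {f : Euc n → EReal} {g : Euc m → EReal} (A : Euc n →L[ℝ] Euc m)

lemma thetaSm_le_theta (hf : NiceFn f) (hg : NiceFn g) {r s : ℝ} (hr : 0 ≤ r) (hs : 0 ≤ s)
    (p : Euc m) : thetaSm f g A r s p ≤ theta f g A p :=
  add_le_add (conjSm_le_conjFn hf.1 hf.2.2.1 hf.2.2.2 hr _)
    (conjSm_le_conjFn hg.1 hg.2.2.1 hg.2.2.2 hs _)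

lemma theta_le_thetaSm_add (hf : NiceFn f) (hg : NiceFn g) {r s : ℝ} (hr : 0 ≤ r)
    (hs : 0 ≤ s) (p : Euc m) :
    theta f g A p ≤ thetaSm f g A r s p + (r * Dsup f + s * Dsup g) := by
  have hf' := conjFn_le_conjSm_add hf.1 hf.2.2.1 hf.2.2.2 hr (ContinuousLinearMap.adjoint A p)
  have hg' := conjFn_le_conjSm_add hg.1 hg.2.2.1 hg.2.2.2 hs (-p)
  unfold theta thetaSm
  linarith

lemma vDual_eq_neg_theta {p₀ : Euc m} (h : ∀ p, theta f g A p₀ ≤ theta f g A p) :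
    vDual f g A = -theta f g A p₀ := by
  rw [vDual, (IsLeast.isGLB ⟨Set.mem_range_self p₀, Set.forall_mem_range.mpr h⟩).ciInf_eq]

end Dual

theorem stmt13_general (n m : ℕ) (f : Euc n → EReal) (g : Euc m → EReal)
    (A : Euc n →L[ℝ] Euc m) (hf : NiceFn f) (hg : NiceFn g)
    (ε R : ℝ) (hε : 0 < ε)
    (ρ μ κ : ℝ) (hρ : ρ = ε / (4 * Dsup f)) (hμ : μ = ε / (4 * Dsup g))
    (hκ : κ = ε / (2 * R ^ 2))
    (pstar : Euc m) (hpstar : ∀ p, theta f g A pstar ≤ theta f g A p)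
    (hRstar : ‖pstar‖ ≤ R)
    (pDS : Euc m) (hpDS : UniqMin (thetaSmK f g A ρ μ κ) pDS)
    (p : Euc m) (t : ℝ)
    (ht : t ≥ 2 * Real.log (25 * (theta f g A 0 - theta f g A pstar + ε / 2) / (2 * ε)))
    (hp : thetaSm f g A ρ μ p - thetaSm f g A ρ μ pDS
        ≤ 25 / 8 * (theta f g A 0 - theta f g A pstar + ε / 2) * Real.exp (-t / 2)) :
    theta f g A p + vDual f g A ≤ ε := by
  have hρ0 : 0 ≤ ρ := hρ ▸ div_nonneg hε.le (mul_nonneg zero_le_four Dsup_nonneg)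
  have hμ0 : 0 ≤ μ := hμ ▸ div_nonneg hε.le (mul_nonneg zero_le_four Dsup_nonneg)
  have hκ0 : 0 ≤ κ := hκ ▸ by positivity
  have hρD : ρ * Dsup f ≤ ε / 4 := by
    rw [hρ, ← div_div]; exact div_mul_le_of_nonneg (by positivity) _
  have hμD : μ * Dsup g ≤ ε / 4 := by
    rw [hμ, ← div_div]; exact div_mul_le_of_nonneg (by positivity) _
  have hκR : κ / 2 * ‖pstar‖ ^ 2 ≤ ε / 4 :=
    calc κ / 2 * ‖pstar‖ ^ 2 ≤ κ / 2 * R ^ 2 := by gcongr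
      _ = ε / 4 / R ^ 2 * R ^ 2 := by rw [hκ]; ring
      _ ≤ ε / 4 := div_mul_le_of_nonneg (by positivity) _
  set C := theta f g A 0 - theta f g A pstar + ε / 2 with hC_def
  have hC : 0 < C := by linarith [hpstar 0]
  have hgap : 25 / 8 * C * Real.exp (-t / 2) ≤ ε / 4 := by
    refine mul_exp_neg_half_le (by positivity) (by positivity) ?_
    convert ht using 3
    field_simp
    ring
  have hsmooth := theta_le_thetaSm_add A hf hg hρ0 hμ0 p
  have hstar := thetaSm_le_theta A hf hg hρ0 hμ0 pstar
  have hmin := hpDS.1 pstar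
  have hpDS_sq : 0 ≤ κ / 2 * ‖pDS‖ ^ 2 := by positivity
  rw [thetaSmK, thetaSmK] at hmin
  rw [vDual_eq_neg_theta A hpstar]
  linarith

/-- ε-accuracy for the dual objective: with the parameter choice
`ρ = ε/(4 D_f), μ = ε/(4 D_g), κ = ε/(2R²)`, once
`θ_{ρ,μ}(p) - θ_{ρ,μ}(p_DS*) ≤ (25/8)(θ(0) - θ(p*) + ε/2) e^{-t/2}` for some
`t ≥ 2 ln(25(θ(0) - θ(p*) + ε/2)/(2ε))`, we have `θ(p) + v(D) ≤ ε`. -/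
theorem stmt13 (n m : ℕ) (f : Euc n → EReal) (g : Euc m → EReal)
    (A : Euc n →L[ℝ] Euc m) (hf : NiceFn f) (hg : NiceFn g)
    (hfeas : ∃ x, f x ≠ ⊤ ∧ g (A x) ≠ ⊤)
    (ε R : ℝ) (hε : 0 < ε) (hDf : 0 < Dsup f) (hDg : 0 < Dsup g) (hR : 0 < R)
    (ρ μ κ : ℝ) (hρ : ρ = ε / (4 * Dsup f)) (hμ : μ = ε / (4 * Dsup g))
    (hκ : κ = ε / (2 * R ^ 2))
    (pstar : Euc m) (hpstar : ∀ p, theta f g A pstar ≤ theta f g A p)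
    (hRstar : ‖pstar‖ ≤ R)
    (pDS : Euc m) (hpDS : UniqMin (thetaSmK f g A ρ μ κ) pDS)
    (p : Euc m) (t : ℝ)
    (ht : t ≥ 2 * Real.log (25 * (theta f g A 0 - theta f g A pstar + ε / 2) / (2 * ε)))
    (hp : thetaSm f g A ρ μ p - thetaSm f g A ρ μ pDS
        ≤ 25 / 8 * (theta f g A 0 - theta f g A pstar + ε / 2) * Real.exp (-t / 2)) :
    theta f g A p + vDual f g A ≤ ε :=
  stmt13_general n m f g A hf hg ε R hε ρ μ κ hρ hμ hκ pstar hpstar hRstar pDS hpDS p t ht hp
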